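/- Let μ > 0 and ζ ∈ [0,1] satisfy √μ·(ζ − α_μ) ∈ (−π/2, π/2) and √μ·(1 − β_μ − ζ) ∈ (−π/2, π/2), where α_μ = (1/√μ)·arctan(k₀²/√μ) and β_μ = (1/√μ)·arctan(k₁²/√μ). Set a := √μ·( tan(√μ·(ζ − α_μ)) + tan(√μ·(1 − β_μ − ζ)) ). Then λ₁(a·δ_ζ) = μ. -/

import Mathlib

/-!
If `p' = -(μ + p²)` on `[c, d]`, differentiating the absolutely continuous function `p y²` gives
`∫ (y' - p y)² = ∫ y'² - μ ∫ y² - [p y²]_c^d` for every test function `y`.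
Take `p = √μ tan (√μ (b - x))`, with `b = α_μ` on `[0, ζ]` and `b = 1 - β_μ` on `[ζ, 1]`:
these choices turn the boundary terms into `k₀² y(0)²` and `k₁² y(1)²`, and the jump of `p`
at `ζ` is exactly `a`. So the Rayleigh numerator minus `μ ∫ y²` is a sum of two integrals of
squares, whence `λ₁ ≥ μ`; both squares vanish for the piecewise cosine `cos (√μ (b - x))`,
which solves `y' = p y` on each side of `ζ`.
-/

open MeasureTheory Set Real Filter

/-- A test function on `[0,1]`: `y` is absolutely continuous on `[0,1]` with
derivative `g` belonging to `L²[0,1]`. -/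
def IsTest (y g : ℝ → ℝ) : Prop :=
  (∀ x ∈ Icc (0:ℝ) 1, y x = y 0 + ∫ t in (0:ℝ)..x, g t) ∧
  IntegrableOn g (Icc (0:ℝ) 1) ∧
  IntegrableOn (fun x => (g x) ^ 2) (Icc (0:ℝ) 1)

/-- The set of Rayleigh quotients of test functions for the Sturm–Liouville problem
`-y'' + q y = λ y`, `y'(0) - k₀² y(0) = 0`, `y'(1) + k₁² y(1) = 0`. -/
def RayleighSet (k0 k1 : ℝ) (q : ℝ → ℝ) : Set ℝ :=
  { r : ℝ | ∃ y g : ℝ → ℝ, IsTest y g ∧ (0 < ∫ x in (0:ℝ)..1, (y x) ^ 2) ∧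
      r = ((∫ x in (0:ℝ)..1, ((g x) ^ 2 + q x * (y x) ^ 2))
            + k0 ^ 2 * (y 0) ^ 2 + k1 ^ 2 * (y 1) ^ 2) / (∫ x in (0:ℝ)..1, (y x) ^ 2) }

/-- The first eigenvalue `λ₁(q)` defined as the infimum of the Rayleigh quotient. -/
noncomputable def lam1 (k0 k1 : ℝ) (q : ℝ → ℝ) : ℝ :=
  sInf (RayleighSet k0 k1 q)

/-- First eigenvalue `λ₁(a·δ_ζ)` of the problem with point-mass potential `a·δ_ζ`
and boundary conditions `y'(0) - k₀² y(0) = 0`, `y'(1) + k₁² y(1) = 0`, defined as the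
infimum of the corresponding Rayleigh quotient. -/
noncomputable def lam1Delta (k0 k1 a ζ : ℝ) : ℝ :=
  sInf { r : ℝ | ∃ y g : ℝ → ℝ, IsTest y g ∧ (0 < ∫ x in (0:ℝ)..1, (y x) ^ 2) ∧
    r = ((∫ x in (0:ℝ)..1, (g x) ^ 2) + a * (y ζ) ^ 2
          + k0 ^ 2 * (y 0) ^ 2 + k1 ^ 2 * (y 1) ^ 2) / (∫ x in (0:ℝ)..1, (y x) ^ 2) }

/-- `alphaCoef k μ = (1/√μ) · arctan(k²/√μ)`. -/
noncomputable def alphaCoef (k μ : ℝ) : ℝ :=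
  (1 / Real.sqrt μ) * Real.arctan (k ^ 2 / Real.sqrt μ)

open Topology

theorem AbsolutelyContinuousOnInterval.congr {f f' : ℝ → ℝ} {a b : ℝ}
    (hf : AbsolutelyContinuousOnInterval f a b) (h : EqOn f f' (uIcc a b)) :
    AbsolutelyContinuousOnInterval f' a b := by
  refine Tendsto.congr' (eventually_inf_principal.mpr (Eventually.of_forall fun E hE => ?_)) hf
  exact Finset.sum_congr rfl fun i hi => by rw [h (hE.1 i hi).1, h (hE.1 i hi).2]

theorem absolutelyContinuousOnInterval_of_eq_add_integral {f g : ℝ → ℝ} {a b : ℝ}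
    (hg : IntervalIntegrable g volume a b) (h : ∀ x ∈ uIcc a b, f x = f a + ∫ t in a..x, g t) :
    AbsolutelyContinuousOnInterval f a b := by
  refine AbsolutelyContinuousOnInterval.congr ?_ fun x hx => (h x hx).symm
  exact (LipschitzWith.const (f a)).lipschitzOnWith.absolutelyContinuousOnInterval.fun_add
    (hg.absolutelyContinuousOnInterval_intervalIntegral left_mem_uIcc)

theorem ae_hasDerivAt_of_eq_add_integral {f g : ℝ → ℝ} {a b : ℝ}
    (hg : IntervalIntegrable g volume a b) (h : ∀ x ∈ uIcc a b, f x = f a + ∫ t in a..x, g t) :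
    ∀ᵐ x, x ∈ uIcc a b → HasDerivAt f (g x) x := by
  have hends : ∀ᵐ x, x ∉ ({min a b, max a b} : Set ℝ) :=
    measure_eq_zero_iff_ae_notMem.1 ((Set.toFinite _).measure_zero _)
  filter_upwards [hg.ae_hasDerivAt_integral, hends] with x hx hxab hxI
  have hint : uIcc a b ∈ 𝓝 x := by
    simp only [mem_insert_iff, mem_singleton_iff, not_or] at hxab
    exact Icc_mem_nhds (lt_of_le_of_ne hxI.1 (Ne.symm hxab.1)) (lt_of_le_of_ne hxI.2 hxab.2)
  exact ((hx hxI a left_mem_uIcc).const_add (f a)).congr_of_eventuallyEq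
    (Filter.eventually_of_mem hint h)

theorem integral_sq_sub_mul_eq_of_riccati {μ c d : ℝ} {p y g : ℝ → ℝ}
    (hp : ∀ x ∈ uIcc c d, HasDerivAt p (-(μ + p x ^ 2)) x)
    (hy : AbsolutelyContinuousOnInterval y c d)
    (hg : ∀ᵐ x, x ∈ uIcc c d → HasDerivAt y (g x) x)
    (hg2 : IntervalIntegrable (fun x => g x ^ 2) volume c d) :
    ∫ x in c..d, (g x - p x * y x) ^ 2 =
      (∫ x in c..d, g x ^ 2) - μ * (∫ x in c..d, y x ^ 2) - (p d * y d ^ 2 - p c * y c ^ 2) := by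
  have hpc : ContinuousOn p (uIcc c d) := fun x hx =>
    (hp x hx).continuousAt.continuousWithinAt
  have hp' : ContinuousOn (fun x => -(μ + p x ^ 2)) (uIcc c d) :=
    (continuousOn_const.add (hpc.pow 2)).neg
  have hpAC : AbsolutelyContinuousOnInterval p c d := by
    refine absolutelyContinuousOnInterval_of_eq_add_integral hp'.intervalIntegrable
      fun x hx => ?_
    have hsub : uIcc c x ⊆ uIcc c d := uIcc_subset_uIcc_left hx
    rw [intervalIntegral.integral_eq_sub_of_hasDerivAt (fun t ht => hp t (hsub ht))
      ((hp'.mono hsub).intervalIntegrable)]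
    ring
  set f : ℝ → ℝ := fun x => p x * (y x * y x)
  have hfAC : AbsolutelyContinuousOnInterval f c d := hpAC.fun_mul (hy.fun_mul hy)
  -- `(p y²)' = -(μ + p²) y² + 2 p y y'`, so the square expands into `g² - (p y²)' - μ y²`
  have hexpand : ∀ᵐ x, x ∈ uIoc c d →
      (g x - p x * y x) ^ 2 = g x ^ 2 - deriv f x - μ * y x ^ 2 := by
    filter_upwards [hg] with x hgx hx
    have hx' := uIoc_subset_uIcc hx
    rw [((hp x hx').fun_mul ((hgx hx').fun_mul (hgx hx'))).deriv]
    ring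
  rw [intervalIntegral.integral_congr_ae hexpand,
    intervalIntegral.integral_sub (hg2.sub hfAC.intervalIntegrable_deriv)
      ((hy.continuousOn.fun_pow 2).intervalIntegrable.const_mul μ),
    intervalIntegral.integral_sub hg2 hfAC.intervalIntegrable_deriv,
    intervalIntegral.integral_const_mul, hfAC.integral_deriv_eq_sub]
  ring

theorem intervalIntegrable_ite_le {ζ a b : ℝ} {F G : ℝ → ℝ} (hF : Continuous F)
    (hG : Continuous G) :
    IntervalIntegrable (fun x => if x ≤ ζ then F x else G x) volume a b := by
  refine ((hF.abs.add hG.abs).intervalIntegrable a b).mono_fun'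
    (hF.measurable.ite measurableSet_Iic hG.measurable).aestronglyMeasurable
    (Eventually.of_forall fun x => ?_)
  dsimp only [Pi.add_apply]
  split_ifs <;> simp

theorem isTest_ite {ζ : ℝ} (hζ : 0 ≤ ζ) {u v u' v' : ℝ → ℝ}
    (hu : ∀ x, HasDerivAt u (u' x) x) (hv : ∀ x, HasDerivAt v (v' x) x)
    (hu' : Continuous u') (hv' : Continuous v') (huv : u ζ = v ζ) :
    IsTest (fun x => if x ≤ ζ then u x else v x) (fun x => if x ≤ ζ then u' x else v' x) := by
  have hg : ∀ a b : ℝ, IntervalIntegrable (fun x => if x ≤ ζ then u' x else v' x) volume a b :=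
    fun a b => intervalIntegrable_ite_le hu' hv'
  have hg2 : IntervalIntegrable (fun x => (if x ≤ ζ then u' x else v' x) ^ 2) volume 0 1 := by
    simpa only [apply_ite (· ^ 2)] using intervalIntegrable_ite_le (hu'.fun_pow 2) (hv'.fun_pow 2)
  have ftc_u : ∀ x ≤ ζ, ∫ t in (0:ℝ)..x, (if t ≤ ζ then u' t else v' t) = u x - u 0 := by
    intro x hx
    rw [intervalIntegral.integral_congr (g := u') fun t ht => if_pos (ht.2.trans (max_le hζ hx))]
    exact intervalIntegral.integral_eq_sub_of_hasDerivAt (fun t _ => hu t)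
      (hu'.intervalIntegrable 0 x)
  refine ⟨fun x _ => ?_, (intervalIntegrable_iff_integrableOn_Icc_of_le zero_le_one).1 (hg 0 1),
    (intervalIntegrable_iff_integrableOn_Icc_of_le zero_le_one).1 hg2⟩
  simp only [if_pos hζ]
  by_cases hxζ : x ≤ ζ
  · rw [if_pos hxζ, ftc_u x hxζ]
    ring
  · have hζx : ζ ≤ x := (not_le.1 hxζ).le
    rw [if_neg hxζ, ← intervalIntegral.integral_add_adjacent_intervals (hg 0 ζ) (hg ζ x),
      ftc_u ζ le_rfl, intervalIntegral.integral_congr_ae (g := v') (Eventually.of_forall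
        fun t ht => if_neg (not_le.2 (uIoc_of_le hζx ▸ ht).1)),
      intervalIntegral.integral_eq_sub_of_hasDerivAt (fun t _ => hv t)
        (hv'.intervalIntegrable ζ x), huv]
    ring

section IsTest

variable {y g : ℝ → ℝ}

theorem IsTest.intervalIntegrable (h : IsTest y g) : IntervalIntegrable g volume 0 1 :=
  (intervalIntegrable_iff_integrableOn_Icc_of_le zero_le_one).2 h.2.1

theorem IsTest.intervalIntegrable_sq (h : IsTest y g) :
    IntervalIntegrable (fun x => g x ^ 2) volume 0 1 :=
  (intervalIntegrable_iff_integrableOn_Icc_of_le zero_le_one).2 h.2.2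

theorem IsTest.eq_add_integral (h : IsTest y g) :
    ∀ x ∈ uIcc 0 1, y x = y 0 + ∫ t in (0:ℝ)..x, g t := by
  simpa only [uIcc_of_le zero_le_one] using h.1

theorem IsTest.absolutelyContinuousOnInterval (h : IsTest y g) :
    AbsolutelyContinuousOnInterval y 0 1 :=
  absolutelyContinuousOnInterval_of_eq_add_integral h.intervalIntegrable h.eq_add_integral

theorem IsTest.ae_hasDerivAt (h : IsTest y g) : ∀ᵐ x, x ∈ uIcc 0 1 → HasDerivAt y (g x) x :=
  ae_hasDerivAt_of_eq_add_integral h.intervalIntegrable h.eq_add_integral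

end IsTest

noncomputable def deltaEnergy (k0 k1 a ζ : ℝ) (y g : ℝ → ℝ) : ℝ :=
  (∫ x in (0:ℝ)..1, (g x) ^ 2) + a * (y ζ) ^ 2 + k0 ^ 2 * (y 0) ^ 2 + k1 ^ 2 * (y 1) ^ 2

theorem deltaEnergy_sub_eq_of_riccati {k0 k1 μ ζ : ℝ} (hζ : ζ ∈ Icc (0:ℝ) 1)
    {p₁ p₂ y g : ℝ → ℝ} (hp₁ : ∀ x ∈ Icc 0 ζ, HasDerivAt p₁ (-(μ + p₁ x ^ 2)) x)
    (hp₂ : ∀ x ∈ Icc ζ 1, HasDerivAt p₂ (-(μ + p₂ x ^ 2)) x)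
    (hp₁0 : p₁ 0 = k0 ^ 2) (hp₂1 : p₂ 1 = -k1 ^ 2) (hyg : IsTest y g) :
    deltaEnergy k0 k1 (p₂ ζ - p₁ ζ) ζ y g - μ * ∫ x in (0:ℝ)..1, y x ^ 2 =
      (∫ x in (0:ℝ)..ζ, (g x - p₁ x * y x) ^ 2) + ∫ x in ζ..1, (g x - p₂ x * y x) ^ 2 := by
  rw [← uIcc_of_le hζ.1] at hp₁
  rw [← uIcc_of_le hζ.2] at hp₂
  have hζ' : ζ ∈ uIcc 0 1 := uIcc_of_le (zero_le_one' ℝ) ▸ hζ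
  have hleft : uIcc 0 ζ ⊆ uIcc 0 1 := uIcc_subset_uIcc_left hζ'
  have hright : uIcc ζ 1 ⊆ uIcc 0 1 := uIcc_subset_uIcc_right hζ'
  have hAC := hyg.absolutelyContinuousOnInterval
  have hg2 := hyg.intervalIntegrable_sq
  have hy2 : IntervalIntegrable (fun x => y x ^ 2) volume 0 1 :=
    (hAC.continuousOn.fun_pow 2).intervalIntegrable
  rw [deltaEnergy, integral_sq_sub_mul_eq_of_riccati hp₁ (hAC.mono hleft)
      (hyg.ae_hasDerivAt.mono fun x hx hx' => hx (hleft hx')) (hg2.mono_set hleft),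
    integral_sq_sub_mul_eq_of_riccati hp₂ (hAC.mono hright)
      (hyg.ae_hasDerivAt.mono fun x hx hx' => hx (hright hx')) (hg2.mono_set hright),
    ← intervalIntegral.integral_add_adjacent_intervals (hg2.mono_set hleft) (hg2.mono_set hright),
    ← intervalIntegral.integral_add_adjacent_intervals (hy2.mono_set hleft) (hy2.mono_set hright),
    hp₁0, hp₂1]
  ring

theorem lam1Delta_eq_of_forall_le {k0 k1 a ζ μ : ℝ}
    (hle : ∀ y g, IsTest y g → μ * ∫ x in (0:ℝ)..1, y x ^ 2 ≤ deltaEnergy k0 k1 a ζ y g)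
    {φ gφ : ℝ → ℝ} (hφ : IsTest φ gφ) (hφpos : 0 < ∫ x in (0:ℝ)..1, φ x ^ 2)
    (hφeq : deltaEnergy k0 k1 a ζ φ gφ = μ * ∫ x in (0:ℝ)..1, φ x ^ 2) :
    lam1Delta k0 k1 a ζ = μ := by
  refine IsLeast.csInf_eq ⟨⟨φ, gφ, hφ, hφpos, ?_⟩, ?_⟩
  · rw [← deltaEnergy, hφeq, mul_div_cancel_right₀ _ hφpos.ne']
  · rintro r ⟨y, g, hyg, hypos, rfl⟩
    exact (le_div_iff₀ hypos).2 (hle y g hyg)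

theorem hasDerivAt_cos_mul_sub (s b x : ℝ) :
    HasDerivAt (fun u => cos (s * (b - u))) (s * sin (s * (b - x))) x := by
  have := ((hasDerivAt_id x).const_sub b).const_mul s |>.cos
  simpa [mul_comm] using this

theorem hasDerivAt_mul_tan_mul_sub (s b x : ℝ) (hx : cos (s * (b - x)) ≠ 0) :
    HasDerivAt (fun u => s * tan (s * (b - u))) (-(s ^ 2 + (s * tan (s * (b - x))) ^ 2)) x := by
  have := ((hasDerivAt_tan hx).comp x (((hasDerivAt_id x).const_sub b).const_mul s)).const_mul s
  refine this.congr_deriv ?_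
  rw [tan_eq_sin_div_cos]
  field_simp
  nlinarith [sin_sq_add_cos_sq (s * (b - x))]

theorem exists_isTest_deriv_eq_mul_tan {s ζ b₁ b₂ : ℝ} (hζ : ζ ∈ Icc (0:ℝ) 1)
    (h₁ : ∀ x ∈ Icc 0 ζ, 0 < cos (s * (b₁ - x))) (h₂ : ∀ x ∈ Icc ζ 1, 0 < cos (s * (b₂ - x))) :
    ∃ φ gφ : ℝ → ℝ, IsTest φ gφ ∧ 0 < ∫ x in (0:ℝ)..1, φ x ^ 2 ∧
      (∀ x ∈ Icc 0 ζ, gφ x = s * tan (s * (b₁ - x)) * φ x) ∧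
      (∀ x ∈ Ioc ζ 1, gφ x = s * tan (s * (b₂ - x)) * φ x) := by
  set C₁ := cos (s * (b₁ - ζ))
  set C₂ := cos (s * (b₂ - ζ))
  have hC₁ : 0 < C₁ := h₁ ζ ⟨hζ.1, le_rfl⟩
  have hC₂ : 0 < C₂ := h₂ ζ ⟨le_rfl, hζ.2⟩
  have hφ := isTest_ite hζ.1
    (fun x => (hasDerivAt_cos_mul_sub s b₁ x).div_const C₁)
    (fun x => (hasDerivAt_cos_mul_sub s b₂ x).div_const C₂) (by fun_prop) (by fun_prop)
    (by rw [div_self hC₁.ne', div_self hC₂.ne'])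
  have profile {b C x : ℝ} (hx : 0 < cos (s * (b - x))) :
      s * sin (s * (b - x)) / C = s * tan (s * (b - x)) * (cos (s * (b - x)) / C) := by
    rw [← tan_mul_cos hx.ne']
    ring
  refine ⟨_, _, hφ, ?_, fun x hx => ?_, fun x hx => ?_⟩
  · refine intervalIntegral.intervalIntegral_pos_of_pos_on
      (hφ.absolutelyContinuousOnInterval.continuousOn.fun_pow 2).intervalIntegrable
      (fun x hx => ?_) zero_lt_one
    by_cases hxζ : x ≤ ζ
    · simpa [hxζ] using pow_pos (div_pos (h₁ x ⟨hx.1.le, hxζ⟩) hC₁) 2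
    · simpa [hxζ] using pow_pos (div_pos (h₂ x ⟨(not_le.1 hxζ).le, hx.2.le⟩) hC₂) 2
  · simpa [hx.2] using profile (h₁ x hx)
  · simpa [not_le.2 hx.1] using profile (h₂ x (Ioc_subset_Icc_self hx))

theorem lam1Delta_eq_of_cos_pos {k0 k1 μ s ζ b₁ b₂ : ℝ} (hs : s ^ 2 = μ)
    (hζ : ζ ∈ Icc (0:ℝ) 1) (h₁ : ∀ x ∈ Icc 0 ζ, 0 < cos (s * (b₁ - x)))
    (h₂ : ∀ x ∈ Icc ζ 1, 0 < cos (s * (b₂ - x)))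
    (hk0 : s * tan (s * b₁) = k0 ^ 2) (hk1 : s * tan (s * (b₂ - 1)) = -k1 ^ 2) :
    lam1Delta k0 k1 (s * tan (s * (b₂ - ζ)) - s * tan (s * (b₁ - ζ))) ζ = μ := by
  set p₁ : ℝ → ℝ := fun x => s * tan (s * (b₁ - x))
  set p₂ : ℝ → ℝ := fun x => s * tan (s * (b₂ - x))
  have energy (y g : ℝ → ℝ) (hyg : IsTest y g) := deltaEnergy_sub_eq_of_riccati hζ
    (p₁ := p₁) (p₂ := p₂) (μ := μ)
    (fun x hx => hs ▸ hasDerivAt_mul_tan_mul_sub s b₁ x (h₁ x hx).ne')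
    (fun x hx => hs ▸ hasDerivAt_mul_tan_mul_sub s b₂ x (h₂ x hx).ne')
    (by simpa [p₁] using hk0) hk1 hyg
  obtain ⟨φ, gφ, hφ, hφpos, hgφ₁, hgφ₂⟩ := exists_isTest_deriv_eq_mul_tan hζ h₁ h₂
  have hres₁ : ∫ x in (0:ℝ)..ζ, (gφ x - p₁ x * φ x) ^ 2 = 0 := by
    refine (intervalIntegral.integral_congr fun x hx => ?_).trans intervalIntegral.integral_zero
    simp [hgφ₁ x (uIcc_of_le hζ.1 ▸ hx), p₁]
  have hres₂ : ∫ x in ζ..1, (gφ x - p₂ x * φ x) ^ 2 = 0 := by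
    refine (intervalIntegral.integral_congr_ae (Eventually.of_forall fun x hx => ?_)).trans
      intervalIntegral.integral_zero
    simp [hgφ₂ x (uIoc_of_le hζ.2 ▸ hx), p₂]
  refine lam1Delta_eq_of_forall_le (fun y g hyg => ?_) hφ hφpos ?_
  · have hleft : 0 ≤ ∫ x in (0:ℝ)..ζ, (g x - p₁ x * y x) ^ 2 :=
      intervalIntegral.integral_nonneg hζ.1 fun x _ => sq_nonneg _
    have hright : 0 ≤ ∫ x in ζ..1, (g x - p₂ x * y x) ^ 2 :=
      intervalIntegral.integral_nonneg hζ.2 fun x _ => sq_nonneg _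
    linarith [energy y g hyg]
  · linarith [energy φ gφ hφ]

section alphaCoef

variable {μ : ℝ} (k : ℝ)

theorem sqrt_mul_alphaCoef (hμ : 0 < μ) : √μ * alphaCoef k μ = arctan (k ^ 2 / √μ) := by
  rw [alphaCoef, ← mul_assoc, mul_one_div_cancel (sqrt_pos.2 hμ).ne', one_mul]

theorem sqrt_mul_alphaCoef_mem_Ico (hμ : 0 < μ) : √μ * alphaCoef k μ ∈ Ico 0 (π / 2) := by
  rw [sqrt_mul_alphaCoef k hμ]
  exact ⟨arctan_nonneg.2 (by positivity), arctan_lt_pi_div_two _⟩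

theorem sqrt_mul_tan_sqrt_mul_alphaCoef (hμ : 0 < μ) :
    √μ * tan (√μ * alphaCoef k μ) = k ^ 2 := by
  rw [sqrt_mul_alphaCoef k hμ, tan_arctan, mul_div_cancel₀ _ (sqrt_pos.2 hμ).ne']

end alphaCoef

theorem stmt13_general (k0 k1 : ℝ)
    (μ ζ : ℝ) (hμ : 0 < μ) (hζ : ζ ∈ Icc (0:ℝ) 1)
    (h1 : Real.sqrt μ * (ζ - alphaCoef k0 μ) ∈ Ioo (-(Real.pi / 2)) (Real.pi / 2))
    (h2 : Real.sqrt μ * (1 - alphaCoef k1 μ - ζ) ∈ Ioo (-(Real.pi / 2)) (Real.pi / 2)) :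
    lam1Delta k0 k1
      (Real.sqrt μ * (Real.tan (Real.sqrt μ * (ζ - alphaCoef k0 μ))
        + Real.tan (Real.sqrt μ * (1 - alphaCoef k1 μ - ζ)))) ζ = μ := by
  obtain ⟨hα0, hαπ⟩ := sqrt_mul_alphaCoef_mem_Ico k0 hμ
  obtain ⟨hβ0, hβπ⟩ := sqrt_mul_alphaCoef_mem_Ico k1 hμ
  have hs := sqrt_nonneg μ
  have hk1 : √μ * tan (√μ * (1 - alphaCoef k1 μ - 1)) = -k1 ^ 2 := by
    rw [show √μ * (1 - alphaCoef k1 μ - 1) = -(√μ * alphaCoef k1 μ) by ring, tan_neg, mul_neg,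
      sqrt_mul_tan_sqrt_mul_alphaCoef k1 hμ]
  convert lam1Delta_eq_of_cos_pos (sq_sqrt hμ.le) hζ
    (fun x hx => cos_pos_of_mem_Ioo ⟨by nlinarith [h1.2, hx.2], by nlinarith [hx.1]⟩)
    (fun x hx => cos_pos_of_mem_Ioo ⟨by nlinarith [hx.2], by nlinarith [h2.2, hx.1]⟩)
    (sqrt_mul_tan_sqrt_mul_alphaCoef k0 hμ) hk1 using 2
  rw [show √μ * (alphaCoef k0 μ - ζ) = -(√μ * (ζ - alphaCoef k0 μ)) by ring, tan_neg]
  ring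

theorem stmt13 (k0 k1 : ℝ) (hk0 : 0 ≤ k0) (hk01 : k0 ≤ k1)
    (μ ζ : ℝ) (hμ : 0 < μ) (hζ : ζ ∈ Icc (0:ℝ) 1)
    (h1 : Real.sqrt μ * (ζ - alphaCoef k0 μ) ∈ Ioo (-(Real.pi / 2)) (Real.pi / 2))
    (h2 : Real.sqrt μ * (1 - alphaCoef k1 μ - ζ) ∈ Ioo (-(Real.pi / 2)) (Real.pi / 2)) :
    lam1Delta k0 k1
      (Real.sqrt μ * (Real.tan (Real.sqrt μ * (ζ - alphaCoef k0 μ))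
        + Real.tan (Real.sqrt μ * (1 - alphaCoef k1 μ - ζ)))) ζ = μ :=
  stmt13_general k0 k1 μ ζ hμ hζ h1 h2
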